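/- arXiv:1802.01545 — 2 statements merged into one kernel-verified Lean document; each statement's English description precedes it below -/
import Mathlib

section
/- For every odd N ≥ 1, the two matching permutations μ̃₁ = π̃∘σ̃⁻¹ and μ̃₂ = π̃∘τ⁻¹∘σ̃⁻¹ associated with the criss-cross cycle are conjugate by the inversion: I∘μ̃₂∘I = μ̃₁. -/
/-- The criss-cross permutation σ̃ of {1,…,N}, written 0-indexed: position `i`
(1-indexed `i+1`) is sent to `2*i` when `2*i < N` (1-indexed: `σ̃(j)=2j-1` for
`j ≤ (N+1)/2`) and to `2*(N-1-i)+1` otherwise (1-indexed: `σ̃(j)=2N-2j+2` for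
`j > (N+1)/2`). -/
noncomputable def sigmaTilde (N : ℕ) : Equiv.Perm (Fin N) :=
  Equiv.ofBijective
    (fun i => if h : 2 * i.val < N then ⟨2 * i.val, h⟩
      else ⟨2 * (N - 1 - i.val) + 1, by have := i.isLt; omega⟩)
    (Finite.injective_iff_bijective.mp (by
      intro a b hab
      have ha := a.isLt; have hb := b.isLt
      by_cases h1 : 2 * a.val < N <;> by_cases h2 : 2 * b.val < N <;>
        simp only [h1, h2, dif_pos, dif_neg, not_false_iff, Fin.mk.injEq, Fin.ext_iff] at hab ⊢ <;>
        omega))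

/-- The criss-cross permutation π̃ = σ̃ ∘ I, where `I = Fin.revPerm` is the inversion
`I(j) = N+1-j` (0-indexed: `i ↦ N-1-i`).  Here `(f * g) i = f (g i)`. -/
noncomputable def piTilde (N : ℕ) : Equiv.Perm (Fin N) := sigmaTilde N * Fin.revPerm


lemma sigmaTilde_val (N : ℕ) (i : Fin N) :
    (sigmaTilde N i).val = if 2 * i.val < N then 2*i.val else 2*(N-1-i.val)+1 := by
  simp [sigmaTilde]; split <;> simp

lemma rotPow_val (n : ℕ) (c : ℕ) (i : Fin (n+1)) :
    (((finRotate (n+1))^c) i).val = (i.val + c) % (n+1) := by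
  induction c generalizing i with
  | zero => simp [Nat.mod_eq_of_lt i.isLt]
  | succ c ih =>
      rw [pow_succ', Equiv.Perm.mul_apply, finRotate_succ_apply, Fin.add_def]
      simp only [ih, Fin.val_one']
      conv_rhs => rw [← Nat.add_assoc, Nat.add_mod (i.val + c) 1]

lemma mod_two_mul (a N : ℕ) (hN : 0 < N) (h : a < 2*N) :
    a % N = if a < N then a else a - N := by
  split
  · exact Nat.mod_eq_of_lt ‹_›
  · rw [Nat.mod_eq_sub_mod (by omega), Nat.mod_eq_of_lt (by omega)]

lemma revPerm_app {n : ℕ} (i : Fin n) : Fin.revPerm i = i.rev := rfl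

lemma conj_sigma (k : ℕ) :
    Fin.revPerm * sigmaTilde (2*k+1) * Fin.revPerm
      = sigmaTilde (2*k+1) * (finRotate (2*k+1))^(k+1) := by
  apply Equiv.ext; intro i
  apply Fin.ext
  simp only [Equiv.Perm.mul_apply, revPerm_app]
  have hi := i.isLt
  have h1 := sigmaTilde_val (2*k+1) i.rev
  have h2 := sigmaTilde_val (2*k+1) (((finRotate (2*k+1))^(k+1)) i)
  have h3 := rotPow_val (2*k) (k+1) i
  have hm := mod_two_mul (i.val + (k+1)) (2*k+1) (by omega) (by omega)
  simp only [Fin.val_rev] at h1 ⊢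
  rw [h1, h2, h3, hm]
  split_ifs <;> omega

lemma conj_rot (k : ℕ) :
    Fin.revPerm * finRotate (2*k+1) * Fin.revPerm = (finRotate (2*k+1))⁻¹ := by
  rw [eq_comm, inv_eq_iff_mul_eq_one]
  apply Equiv.ext; intro i
  apply Fin.ext
  simp only [Equiv.Perm.mul_apply, revPerm_app, Equiv.Perm.one_apply]
  have hi := i.isLt
  have h3 := rotPow_val (2*k) 1 i.rev
  have h4 := rotPow_val (2*k) 1 (Fin.rev ((finRotate (2*k+1)) (Fin.rev i)))
  simp only [pow_one] at h3 h4
  rw [h4, Fin.val_rev, h3, Fin.val_rev]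
  have e1 : (2*k+1 - (i.val+1) + 1) % (2*k+1) = if i.val = 0 then 0 else 2*k+1-i.val := by
    rw [mod_two_mul _ _ (by omega) (by omega)]; split_ifs <;> omega
  rw [e1]
  split_ifs with h0
  · rw [show 2*k+1 - (0+1) + 1 = 2*k+1 by omega, Nat.mod_self]; omega
  · rw [Nat.mod_eq_of_lt (by omega)]; omega

lemma rot_pow_N (k : ℕ) : (finRotate (2*k+1))^(2*k+1) = 1 := by
  apply Equiv.ext; intro i
  apply Fin.ext
  rw [rotPow_val]
  simp [Nat.add_mod, Nat.mod_eq_of_lt i.isLt]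

lemma key {G : Type*} [Group G] (I s t : G) (k : ℕ)
    (h1 : I * s * I = s * t^(k+1)) (h2 : I * t * I = t⁻¹)
    (hII : I * I = 1) (h4 : t^(2*k+1) = 1) :
    I * (s * I * t⁻¹ * s⁻¹) * I = s * I * s⁻¹ := by
  have hInv : I⁻¹ = I := by rw [inv_eq_iff_mul_eq_one]; exact hII
  have e1 : I * s = s * t^(k+1) * I := by
    calc I * s = I * s * (I * I) := by rw [hII, mul_one]
    _ = (I * s * I) * I := by rw [← mul_assoc]
    _ = s * t^(k+1) * I := by rw [h1]
  have e2 : I * t⁻¹ = t * I := by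
    have h2' : I * t⁻¹ * I = t := by
      have := congrArg (·⁻¹) h2
      simp only [mul_inv_rev, hInv, inv_inv] at this
      rw [mul_assoc]; exact this
    calc I * t⁻¹ = I * t⁻¹ * (I * I) := by rw [hII, mul_one]
    _ = (I * t⁻¹ * I) * I := by rw [← mul_assoc]
    _ = t * I := by rw [h2']
  have e3 : s⁻¹ * I = t^(k+1) * I * s⁻¹ := by
    have := congrArg (fun x => s⁻¹ * x * s⁻¹) e1
    simpa [mul_assoc] using this
  have e4 : t^(k+1) * t⁻¹ * t^(k+1) = 1 := by
    have h5 : t^(k+1) * t⁻¹ = t^k := by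
      rw [pow_succ, mul_inv_cancel_right]
    rw [h5, ← pow_add, show k + (k+1) = 2*k+1 by omega, h4]
  calc I * (s * I * t⁻¹ * s⁻¹) * I
      = (I * s) * (I * t⁻¹) * (s⁻¹ * I) := by group
    _ = (s * t^(k+1) * I) * (t * I) * (t^(k+1) * I * s⁻¹) := by rw [e1, e2, e3]
    _ = s * t^(k+1) * (I * t * I) * t^(k+1) * I * s⁻¹ := by group
    _ = s * t^(k+1) * t⁻¹ * t^(k+1) * I * s⁻¹ := by rw [h2]
    _ = s * (t^(k+1) * t⁻¹ * t^(k+1)) * (I * s⁻¹) := by group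
    _ = s * I * s⁻¹ := by rw [e4, mul_one, mul_assoc]

/-- **The two criss-cross matchings are conjugate by the inversion (odd `N`).**
For odd `N ≥ 1`, the matching permutations `μ̃₁ = π̃∘σ̃⁻¹` and `μ̃₂ = π̃∘τ⁻¹∘σ̃⁻¹`
associated with the criss-cross cycle satisfy `I∘μ̃₂∘I = μ̃₁`, where `τ = finRotate N`
is the left rotation and `I = Fin.revPerm` the inversion.  (Here `(f*g) i = f (g i)`.) -/
theorem crisscross_matchings_conjugate (N : ℕ) (hN : 1 ≤ N) (hodd : Odd N) :
    (Fin.revPerm : Equiv.Perm (Fin N)) * (piTilde N * (finRotate N)⁻¹ * (sigmaTilde N)⁻¹)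
        * Fin.revPerm
      = piTilde N * (sigmaTilde N)⁻¹ := by
  obtain ⟨k, hk⟩ := hodd
  subst hk
  have hII : (Fin.revPerm : Equiv.Perm (Fin (2*k+1))) * Fin.revPerm = 1 := by
    apply Equiv.ext; intro i
    simp [Equiv.Perm.mul_apply, revPerm_app, Fin.rev_rev]
  simp only [piTilde]
  exact key Fin.revPerm (sigmaTilde (2*k+1)) (finRotate (2*k+1)) k
    (conj_sigma k) (conj_rot k) hII (rot_pow_N k)
end

section
/- Let N = 3 and, for a permutation π ∈ S_3, define E(π) = (r_1−b_{π(1)})² + (r_1−b_{π(3)})² + (r_3−b_{π(2)})² + (r_3−b_{π(1)})² + (r_2−b_{π(3)})² + (r_2−b_{π(2)})², where r and b are the increasing order statistics of two independent samples of 3 i.i.d. uniform points on [0,1]. Then E[E((2,3,1))] = 3/4, E[E((1,3,2))] = E[E((3,2,1))] = 7/8, E[E((1,2,3))] = E[E((3,1,2))] = 9/8, and E[E((2,1,3))] = 5/4; in particular the criss-cross cycle π = (2,3,1) has the smallest average cost. -/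
open MeasureTheory

/-- The law of a pair of two independent samples of `N` i.i.d. points uniformly
distributed on `[0,1]` (red sample, blue sample). -/
noncomputable def unifPair (N : ℕ) : Measure ((Fin N → ℝ) × (Fin N → ℝ)) :=
  (Measure.pi fun _ : Fin N => volume.restrict (Set.Icc (0:ℝ) 1)).prod
    (Measure.pi fun _ : Fin N => volume.restrict (Set.Icc (0:ℝ) 1))

/-- The increasing order statistics of a finite sample `x`. -/
noncomputable def orderStat {N : ℕ} (x : Fin N → ℝ) : Fin N → ℝ := x ∘ Tuple.sort x

/-- The cost `E(π)` of the Hamiltonian cycle of `K_{3,3}` with red-point order fixed by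
`σ̃ = (1,3,2)` and blue points visited in the order prescribed by `π`, cost exponent
`p = 2`:  `E(π) = (r₁−b_{π(1)})² + (r₁−b_{π(3)})² + (r₃−b_{π(2)})² + (r₃−b_{π(1)})²
+ (r₂−b_{π(3)})² + (r₂−b_{π(2)})²` (written 0-indexed below), where `r`, `b` are the
increasing order statistics of the two samples of 3 uniform points. -/
noncomputable def costN3 (π : Fin 3 → Fin 3) (q : (Fin 3 → ℝ) × (Fin 3 → ℝ)) : ℝ :=
  (orderStat q.1 0 - orderStat q.2 (π 0)) ^ 2 + (orderStat q.1 0 - orderStat q.2 (π 2)) ^ 2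
  + (orderStat q.1 2 - orderStat q.2 (π 1)) ^ 2 + (orderStat q.1 2 - orderStat q.2 (π 0)) ^ 2
  + (orderStat q.1 1 - orderStat q.2 (π 2)) ^ 2 + (orderStat q.1 1 - orderStat q.2 (π 1)) ^ 2

/-!
Every edge term of the cost has, by independence of the two samples, expectation
`E r_i² + E b_k² - 2 E r_i E b_k`. The order statistics of three uniform points have means
`1/4, 1/2, 3/4`: the extreme ones by the tail formula, `E min = ∫₀¹ (1 - t)³ dt` and
`E max = ∫₀¹ (1 - t³) dt`, the middle one because the three add up to the sample sum. Sorting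
permutes the sample, so `∑ E r_i² = ∑ E x_i² = 1`. Every vertex lies on two edges of the cycle,
hence `E[E(π)] = 4 - (1/8) ∑_{edges r_i b_k} i k`, which is evaluated for each `π`.
-/

open Finset

section Extrema

variable {ι : Type*} [Fintype ι] [Nonempty ι]

lemma continuous_univ_inf' : Continuous fun x : ι → ℝ => univ.inf' univ_nonempty x :=
  Continuous.finset_inf'_apply univ_nonempty fun i _ => continuous_apply i

lemma continuous_univ_sup' : Continuous fun x : ι → ℝ => univ.sup' univ_nonempty x :=
  Continuous.finset_sup'_apply univ_nonempty fun i _ => continuous_apply i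

end Extrema

section OrderStat

variable {n : ℕ}

lemma monotone_orderStat (x : Fin n → ℝ) : Monotone (orderStat x) := Tuple.monotone_sort x

lemma sum_comp_orderStat {M : Type*} [AddCommMonoid M] (x : Fin n → ℝ) (g : ℝ → M) :
    ∑ i, g (orderStat x i) = ∑ i, g (x i) :=
  Equiv.sum_comp (Tuple.sort x) (g ∘ x)

lemma exists_orderStat_eq (x : Fin n → ℝ) (i : Fin n) : ∃ j, orderStat x j = x i :=
  ⟨(Tuple.sort x).symm i, by simp [orderStat]⟩

lemma orderStat_zero (x : Fin (n + 1) → ℝ) : orderStat x 0 = univ.inf' univ_nonempty x := by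
  refine le_antisymm ((le_inf'_iff _ _).2 fun i _ => ?_) (inf'_le x (mem_univ _))
  obtain ⟨j, hj⟩ := exists_orderStat_eq x i
  exact hj ▸ monotone_orderStat x (Fin.zero_le j)

lemma orderStat_last (x : Fin (n + 1) → ℝ) :
    orderStat x (Fin.last n) = univ.sup' univ_nonempty x := by
  refine le_antisymm (le_sup' x (mem_univ _)) ((sup'_le_iff _ _).2 fun i _ => ?_)
  obtain ⟨j, hj⟩ := exists_orderStat_eq x i
  exact hj ▸ monotone_orderStat x (Fin.le_last j)

lemma orderStat_one_of_fin_three (x : Fin 3 → ℝ) :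
    orderStat x 1 = ∑ i, x i - univ.inf' univ_nonempty x - univ.sup' univ_nonempty x := by
  rw [← orderStat_zero, ← orderStat_last, show Fin.last 2 = 2 from rfl,
    ← sum_comp_orderStat x fun t => t, Fin.sum_univ_three]
  ring

lemma continuous_orderStat_fin_three (i : Fin 3) :
    Continuous fun x : Fin 3 → ℝ => orderStat x i := by
  fin_cases i
  · show Continuous fun x : Fin 3 → ℝ => orderStat x 0
    simpa only [orderStat_zero] using continuous_univ_inf'
  · show Continuous fun x : Fin 3 → ℝ => orderStat x 1
    simp only [orderStat_one_of_fin_three]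
    exact ((continuous_finsetSum _ fun i _ => continuous_apply i).sub continuous_univ_inf').sub
      continuous_univ_sup'
  · show Continuous fun x : Fin 3 → ℝ => orderStat x (Fin.last 2)
    simpa only [orderStat_last] using continuous_univ_sup'

end OrderStat

section UnifCube

variable {ι : Type*} [Fintype ι]

noncomputable def unifCube (ι : Type*) [Fintype ι] : Measure (ι → ℝ) :=
  Measure.pi fun _ : ι => volume.restrict (Set.Icc (0:ℝ) 1)

instance : IsProbabilityMeasure (volume.restrict (Set.Icc (0:ℝ) 1)) :=
  ⟨by simp [Real.volume_Icc]⟩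

instance : IsProbabilityMeasure (unifCube ι) := by unfold unifCube; infer_instance

lemma unifCube_eq_restrict :
    unifCube ι = volume.restrict (Set.univ.pi fun _ : ι => Set.Icc (0:ℝ) 1) := by
  rw [unifCube, volume_pi, Measure.restrict_pi_pi]

lemma ae_mem_Icc_unifCube : ∀ᵐ x ∂unifCube ι, ∀ i, x i ∈ Set.Icc (0:ℝ) 1 := by
  rw [unifCube_eq_restrict]
  filter_upwards [ae_restrict_mem (MeasurableSet.univ_pi fun _ => measurableSet_Icc)]
    with x hx using Set.mem_univ_pi.1 hx

lemma Continuous.integrable_unifCube {f : (ι → ℝ) → ℝ} (hf : Continuous f) :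
    Integrable f (unifCube ι) := by
  rw [unifCube_eq_restrict]
  exact hf.continuousOn.integrableOn_compact (isCompact_univ_pi fun _ => isCompact_Icc)

lemma Continuous.memLp_two_unifCube {f : (ι → ℝ) → ℝ} (hf : Continuous f) :
    MemLp f 2 (unifCube ι) :=
  (memLp_two_iff_integrable_sq hf.aestronglyMeasurable).2 (hf.fun_pow 2).integrable_unifCube

lemma unifCube_real_univ_pi {s : Set ℝ} (hs : MeasurableSet s) :
    (unifCube ι).real (Set.univ.pi fun _ => s)
      = volume.real (s ∩ Set.Icc 0 1) ^ Fintype.card ι := by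
  simp [unifCube, measureReal_def, Measure.pi_pi, Measure.restrict_apply hs]

lemma integral_sum_comp_unifCube {g : ℝ → ℝ} (hg : Continuous g) :
    ∫ x, ∑ i, g (x i) ∂unifCube ι = Fintype.card ι * ∫ t in (0:ℝ)..1, g t := by
  rw [integral_finsetSum univ fun i _ =>
    (hg.comp (continuous_apply i)).integrable_unifCube (f := fun x => g (x i))]
  have hcoord : ∀ i, ∫ x, g (x i) ∂unifCube ι = ∫ t in Set.Icc 0 1, g t := fun i =>
    integral_comp_eval hg.aestronglyMeasurable
  simp only [hcoord, sum_const, card_univ, nsmul_eq_mul, integral_Icc_eq_integral_Ioc,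
    intervalIntegral.integral_of_le zero_le_one]

variable [Nonempty ι]

lemma integral_inf'_unifCube :
    ∫ x, univ.inf' univ_nonempty x ∂unifCube ι = 1 / (Fintype.card ι + 1) := by
  have htail : ∀ t ∈ Set.Ioc (0:ℝ) 1,
      (unifCube ι).real {x | t ≤ univ.inf' univ_nonempty x} = (1 - t) ^ Fintype.card ι := by
    intro t ht
    have hset : {x : ι → ℝ | t ≤ univ.inf' univ_nonempty x} = Set.univ.pi fun _ => Set.Ici t := by
      ext x
      rw [Set.mem_ofPred_eq, Set.mem_univ_pi, le_inf'_iff]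
      simp
    have hIcc : Set.Ici t ∩ Set.Icc 0 1 = Set.Icc t 1 := by
      ext y; simp only [Set.mem_inter_iff, Set.mem_Ici, Set.mem_Icc]; grind
    rw [hset, unifCube_real_univ_pi measurableSet_Ici, hIcc, Real.volume_real_Icc_of_le ht.2]
  rw [continuous_univ_inf'.integrable_unifCube.integral_eq_integral_Ioc_meas_le (M := 1)
      (ae_mem_Icc_unifCube.mono fun x hx => (le_inf'_iff _ _).2 fun i _ => (hx i).1)
      (ae_mem_Icc_unifCube.mono fun x hx =>
        inf'_le_of_le _ (mem_univ (Classical.arbitrary ι)) (hx _).2),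
    setIntegral_congr_fun measurableSet_Ioc htail, ← intervalIntegral.integral_of_le zero_le_one,
    intervalIntegral.integral_comp_sub_left fun t => t ^ Fintype.card ι]
  simp

lemma integral_sup'_unifCube :
    ∫ x, univ.sup' univ_nonempty x ∂unifCube ι = Fintype.card ι / (Fintype.card ι + 1) := by
  have htail : ∀ t ∈ Set.Ioc (0:ℝ) 1,
      (unifCube ι).real {x | t ≤ univ.sup' univ_nonempty x} = 1 - t ^ Fintype.card ι := by
    intro t ht
    have hset : {x : ι → ℝ | t ≤ univ.sup' univ_nonempty x}
        = (Set.univ.pi fun _ => Set.Iio t)ᶜ := by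
      ext x
      rw [Set.mem_compl_iff, Set.mem_univ_pi, Set.mem_ofPred_eq, ← not_lt, sup'_lt_iff]
      simp
    have hIco : Set.Iio t ∩ Set.Icc 0 1 = Set.Ico 0 t := by
      ext y; simp only [Set.mem_inter_iff, Set.mem_Iio, Set.mem_Icc, Set.mem_Ico]; grind
    rw [hset, probReal_compl_eq_one_sub (MeasurableSet.univ_pi fun _ => measurableSet_Iio),
      unifCube_real_univ_pi measurableSet_Iio, hIco, Real.volume_real_Ico_of_le ht.1.le, sub_zero]
  rw [continuous_univ_sup'.integrable_unifCube.integral_eq_integral_Ioc_meas_le (M := 1)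
      (ae_mem_Icc_unifCube.mono fun x hx =>
        le_sup'_of_le _ (mem_univ (Classical.arbitrary ι)) (hx _).1)
      (ae_mem_Icc_unifCube.mono fun x hx => (sup'_le_iff _ _).2 fun i _ => (hx i).2),
    setIntegral_congr_fun measurableSet_Ioc htail, ← intervalIntegral.integral_of_le zero_le_one]
  rw [intervalIntegral.integral_sub intervalIntegrable_const
      (intervalIntegral.intervalIntegrable_pow _), intervalIntegral.integral_const, integral_pow]
  field_simp
  ring

end UnifCube

lemma integral_sub_sq_prod {α β : Type*} [MeasurableSpace α] [MeasurableSpace β]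
    {μ : Measure α} {ν : Measure β} [IsProbabilityMeasure μ] [IsProbabilityMeasure ν]
    {f : α → ℝ} {g : β → ℝ} (hf : MemLp f 2 μ) (hg : MemLp g 2 ν) :
    ∫ p, (f p.1 - g p.2) ^ 2 ∂μ.prod ν
      = ∫ x, f x ^ 2 ∂μ + ∫ y, g y ^ 2 ∂ν - 2 * ((∫ x, f x ∂μ) * ∫ y, g y ∂ν) := by
  have hsq : ∀ p : α × β, (f p.1 - g p.2) ^ 2 = f p.1 ^ 2 + g p.2 ^ 2 - 2 * (f p.1 * g p.2) :=
    fun p => by ring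
  have hf2 := hf.integrable_sq.comp_fst ν
  have hg2 := (hg.comp_snd μ).integrable_sq
  have hfg := (hf.integrable one_le_two).mul_prod (hg.integrable one_le_two)
  simp_rw [hsq]
  rw [integral_sub (hf2.fun_add hg2) (hfg.const_mul 2), integral_add hf2 hg2, integral_const_mul,
    integral_fun_fst (fun x => f x ^ 2), integral_fun_snd (fun y => g y ^ 2), integral_prod_mul]
  simp

lemma integral_orderStat_fin_three (i : Fin 3) :
    ∫ x, orderStat x i ∂unifCube (Fin 3) = (i + 1) / 4 := by
  fin_cases i
  · show ∫ x, orderStat x 0 ∂unifCube (Fin 3) = _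
    simp only [orderStat_zero, integral_inf'_unifCube]
    norm_num
  · show ∫ x, orderStat x 1 ∂unifCube (Fin 3) = _
    have hsum : Continuous fun x : Fin 3 → ℝ => ∑ i, x i :=
      continuous_finsetSum _ fun i _ => continuous_apply i
    have hmean : ∫ x, ∑ i, x i ∂unifCube (Fin 3) = 3 / 2 :=
      (integral_sum_comp_unifCube continuous_id).trans (by norm_num)
    simp only [orderStat_one_of_fin_three]
    rw [integral_sub ?_ continuous_univ_sup'.integrable_unifCube,
      integral_sub hsum.integrable_unifCube continuous_univ_inf'.integrable_unifCube,
      hmean, integral_inf'_unifCube, integral_sup'_unifCube]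
    · norm_num
    · exact (hsum.sub continuous_univ_inf').integrable_unifCube
  · show ∫ x, orderStat x (Fin.last 2) ∂unifCube (Fin 3) = _
    simp only [orderStat_last, integral_sup'_unifCube]
    norm_num

lemma sum_integral_orderStat_sq_fin_three :
    ∑ i, ∫ x, orderStat x i ^ 2 ∂unifCube (Fin 3) = 1 := by
  rw [← integral_finsetSum univ fun i _ =>
      ((continuous_orderStat_fin_three i).fun_pow 2).integrable_unifCube]
  simp only [sum_comp_orderStat _ (· ^ 2)]
  rw [integral_sum_comp_unifCube (continuous_pow 2)]
  norm_num

section CycleCost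

variable {n : ℕ} [NeZero n]

/-- The weight of the Hamiltonian cycle `r_{σ 0} b_{π 0} r_{σ 1} b_{π 1} ⋯ r_{σ (n-1)} b_{π (n-1)}`
of `K_{n,n}` under the edge weight `w`: red vertex `σ j` is joined to `π j` and `π (j - 1)`. -/
def cycleCost (σ π : Fin n → Fin n) (w : Fin n → Fin n → ℝ) : ℝ :=
  ∑ j, (w (σ j) (π j) + w (σ j) (π (j - 1)))

lemma cycleCost_add_of_bijective {σ π : Fin n → Fin n} (hσ : σ.Bijective) (hπ : π.Bijective)
    (a b : Fin n → ℝ) :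
    cycleCost σ π (fun i k => a i + b k) = 2 * (∑ i, a i + ∑ k, b k) := by
  have hshift : (fun j => π (j - 1)).Bijective := hπ.comp (Equiv.subRight 1).bijective
  simp only [cycleCost, sum_add_distrib, hσ.sum_comp a, hπ.sum_comp b, hshift.sum_comp b]
  ring

lemma cycleCost_sub_mul (σ π : Fin n → Fin n) (u v : Fin n → Fin n → ℝ) (c : ℝ) :
    cycleCost σ π (fun i k => u i k - c * v i k) = cycleCost σ π u - c * cycleCost σ π v := by
  simp only [cycleCost, mul_sum, ← sum_sub_distrib]
  exact sum_congr rfl fun j _ => by ring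

lemma integral_cycleCost {α : Type*} [MeasurableSpace α] {μ : Measure α}
    (σ π : Fin n → Fin n) {F : Fin n → Fin n → α → ℝ} (hF : ∀ i k, Integrable (F i k) μ) :
    ∫ q, cycleCost σ π (fun i k => F i k q) ∂μ = cycleCost σ π (fun i k => ∫ q, F i k q ∂μ) := by
  simp only [cycleCost]
  rw [integral_finsetSum univ fun j _ => (hF _ _).fun_add (hF _ _)]
  exact sum_congr rfl fun j _ => integral_add (hF _ _) (hF _ _)

lemma cycleCost_fin_three (σ π : Fin 3 → Fin 3) (w : Fin 3 → Fin 3 → ℝ) :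
    cycleCost σ π w = w (σ 0) (π 0) + w (σ 0) (π 2) + w (σ 1) (π 1) + w (σ 1) (π 0)
      + w (σ 2) (π 2) + w (σ 2) (π 1) := by
  rw [cycleCost, Fin.sum_univ_three, show (0 : Fin 3) - 1 = 2 from rfl, sub_self,
    show (2 : Fin 3) - 1 = 1 from rfl]
  ring

end CycleCost

lemma costN3_eq_cycleCost (π : Fin 3 → Fin 3) (q : (Fin 3 → ℝ) × (Fin 3 → ℝ)) :
    costN3 π q = cycleCost ![0, 2, 1] π fun i k => (orderStat q.1 i - orderStat q.2 k) ^ 2 := by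
  rw [cycleCost_fin_three]
  simp only [costN3, Matrix.cons_val_zero, Matrix.cons_val_one, Matrix.cons_val_two,
    Matrix.tail_cons, Matrix.head_cons]

lemma integral_costN3 {π : Fin 3 → Fin 3} (hπ : π.Bijective) :
    ∫ q, costN3 π q ∂unifPair 3
      = 4 - cycleCost ![0, 2, 1] π (fun i k => ((i : ℝ) + 1) * ((k : ℝ) + 1)) / 8 := by
  have hmem : ∀ i, MemLp (fun x => orderStat x i) 2 (unifCube (Fin 3)) := fun i =>
    (continuous_orderStat_fin_three i).memLp_two_unifCube
  have hedge : ∀ i k : Fin 3,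
      ∫ q, (orderStat q.1 i - orderStat q.2 k) ^ 2 ∂unifPair 3
        = ∫ x, orderStat x i ^ 2 ∂unifCube (Fin 3) + ∫ x, orderStat x k ^ 2 ∂unifCube (Fin 3)
          - 1 / 8 * (((i : ℝ) + 1) * ((k : ℝ) + 1)) := fun i k => by
    rw [show unifPair 3 = (unifCube (Fin 3)).prod (unifCube (Fin 3)) from rfl,
      integral_sub_sq_prod (hmem i) (hmem k), integral_orderStat_fin_three,
      integral_orderStat_fin_three]
    ring
  have hint : ∀ i k : Fin 3, Integrable
      (fun q : (Fin 3 → ℝ) × (Fin 3 → ℝ) => (orderStat q.1 i - orderStat q.2 k) ^ 2)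
      (unifPair 3) := fun i k =>
    (((hmem i).comp_fst _).sub ((hmem k).comp_snd _)).integrable_sq
  simp only [costN3_eq_cycleCost]
  rw [integral_cycleCost _ _ hint]
  simp only [hedge]
  rw [cycleCost_sub_mul, cycleCost_add_of_bijective (by decide) hπ,
    sum_integral_orderStat_sq_fin_three]
  ring

lemma coe_perm_fin_three (π : Equiv.Perm (Fin 3)) :
    ⇑π = ![1, 2, 0] ∨ ⇑π = ![0, 2, 1] ∨ ⇑π = ![2, 1, 0] ∨
      ⇑π = ![0, 1, 2] ∨ ⇑π = ![2, 0, 1] ∨ ⇑π = ![1, 0, 2] := by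
  revert π
  decide

/-- **The case `N = 3`.**  Writing a permutation `π ∈ S₃` by its (1-indexed) list of
values, the average costs are `E[E((2,3,1))] = 3/4`,
`E[E((1,3,2))] = E[E((3,2,1))] = 7/8`, `E[E((1,2,3))] = E[E((3,1,2))] = 9/8`, and
`E[E((2,1,3))] = 5/4`; in particular the criss-cross cycle `π = (2,3,1)` has the
smallest average cost. -/
theorem average_costs_three_points :
    (∫ q, costN3 ![1, 2, 0] q ∂(unifPair 3) = 3 / 4) ∧
    (∫ q, costN3 ![0, 2, 1] q ∂(unifPair 3) = 7 / 8) ∧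
    (∫ q, costN3 ![2, 1, 0] q ∂(unifPair 3) = 7 / 8) ∧
    (∫ q, costN3 ![0, 1, 2] q ∂(unifPair 3) = 9 / 8) ∧
    (∫ q, costN3 ![2, 0, 1] q ∂(unifPair 3) = 9 / 8) ∧
    (∫ q, costN3 ![1, 0, 2] q ∂(unifPair 3) = 5 / 4) ∧
    (∀ π : Equiv.Perm (Fin 3),
      ∫ q, costN3 ![1, 2, 0] q ∂(unifPair 3) ≤ ∫ q, costN3 (⇑π) q ∂(unifPair 3)) := by
  refine ⟨?_, ?_, ?_, ?_, ?_, ?_, fun π => ?minimal⟩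
  case minimal =>
    rw [integral_costN3 (by decide), integral_costN3 π.bijective]
    rcases coe_perm_fin_three π with h | h | h | h | h | h <;>
      norm_num [h, cycleCost_fin_three, Matrix.cons_val_two, Matrix.tail_cons, Matrix.head_cons]
  all_goals
    rw [integral_costN3 (by decide)]
    norm_num [cycleCost_fin_three, Matrix.cons_val_two, Matrix.tail_cons, Matrix.head_cons]
end
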